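/- Let f : ℝ → ℝ be a nonnegative nondecreasing function and let G be a finite simple bipartite graph (every edge joins the two sides of a fixed bipartition) with n vertices and average degree d̄ = 2|E(G)|/n ≥ 16. If every pair of distinct vertices of G has f-sparse sub-bineighborhoods, then d̄³ ≤ 2^{11} · n · f(2·d̄). -/

import Mathlib

/-- The number of edges of `G` with one endpoint in `U` and the other endpoint in `W`
(counted via ordered pairs; for disjoint `U`, `W` each such edge is counted once). -/
noncomputable def edgesBetween {V : Type*} (G : SimpleGraph V) (U W : Set V) : ℕ :=
  {p : V × V | p.1 ∈ U ∧ p.2 ∈ W ∧ G.Adj p.1 p.2}.ncard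

/-!
Let `Q = ∑_{(u,v)} e(N(u) \ {v}, N(v) \ {u})`, which counts the walks `u x y v` with `x ≠ v` and
`y ≠ u`, i.e. `∑_{x ~ y} (deg x - 1)(deg y - 1)` over ordered edges.

Upper bound: if `u` and `v` lie on the same side, `N(u)` and `N(v)` lie on the same side and span
no edges; otherwise they are disjoint, and cutting them into pieces of size at most
`t = ⌊d̄⌋` gives `e ≤ (deg u / t + 1)(deg v / t + 1) f(2t)`, hence `Q ≤ 9 n² f(2d̄)`.

Lower bound: deleting vertices of degree at most `k = ⌈d̄/8⌉` one at a time loses at most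
`2kn ≤ n d̄ / 2` of the `n d̄` ordered edges and leaves a set `S` of minimum degree `> k`. Every
ordered edge inside `S` is the middle of at least `k²` walks, so `Q ≥ k² n d̄ / 2 ≥ n d̄³ / 128`.
Comparing the two bounds gives `d̄³ ≤ 1152 n f(2d̄)`.
-/

open Finset

theorem Finset.le_card_div_add_one_mul_of_forall_card_le {α : Type*} [DecidableEq α]
    (g : Finset α → ℝ) (hg : ∀ A B, Disjoint A B → g (A ∪ B) = g A + g B)
    {t : ℕ} (ht : 0 < t) {C : ℝ} (hC : 0 ≤ C) (A : Finset α)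
    (hA : ∀ U ⊆ A, #U ≤ t → g U ≤ C) : g A ≤ (#A / t + 1) * C := by
  induction A using Finset.strongInduction with
  | H A ih =>
    by_cases hAt : #A ≤ t
    · calc g A ≤ C := hA A Subset.rfl hAt
        _ ≤ (#A / t + 1) * C := le_mul_of_one_le_left hC (le_add_of_nonneg_left (by positivity))
    · obtain ⟨U, hUA, hU⟩ := exists_subset_card_eq (s := A) (n := t) (by omega)
      have hsplit : g A = g U + g (A \ U) := by
        rw [← hg _ _ disjoint_sdiff, union_sdiff_of_subset hUA]
      have hrest := ih (A \ U) (sdiff_ssubset hUA (card_pos.mp (by omega)))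
        fun W hW => hA W (hW.trans sdiff_subset)
      have hcard : (#(A \ U) : ℝ) = #A - t := by
        rw [card_sdiff_of_subset hUA, hU, Nat.cast_sub (by omega)]
      rw [hcard] at hrest
      rw [hsplit]
      calc g U + g (A \ U) ≤ C + ((#A - t) / t + 1) * C := add_le_add (hA U hUA hU.le) hrest
        _ = (#A / t + 1) * C := by field_simp; ring

namespace SimpleGraph

variable {V : Type*} (G : SimpleGraph V) [DecidableRel G.Adj]

theorem card_interedges_univ [Fintype V] :
    #(G.interedges univ univ) = ∑ v, G.degree v := by
  rw [interedges_def, card_filter, sum_product]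
  refine sum_congr rfl fun v _ => ?_
  rw [← card_neighborFinset_eq_degree, neighborFinset_eq_filter, card_filter]

theorem edgesBetween_coe (U W : Finset V) : edgesBetween G U W = #(G.interedges U W) := by
  rw [edgesBetween, ← Set.ncard_coe_finset]
  congr 1
  ext
  simp [mem_interedges_iff]

variable [DecidableEq V]

theorem card_interedges_union_left {A B : Finset V} (h : Disjoint A B) (W : Finset V) :
    #(G.interedges (A ∪ B) W) = #(G.interedges A W) + #(G.interedges B W) := by
  rw [← card_union_of_disjoint (G.interedges_disjoint_left h W), interedges_def, interedges_def,
    interedges_def, union_product, filter_union]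

theorem card_interedges_union_right (U : Finset V) {A B : Finset V} (h : Disjoint A B) :
    #(G.interedges U (A ∪ B)) = #(G.interedges U A) + #(G.interedges U B) := by
  rw [← card_union_of_disjoint (G.interedges_disjoint_right U h), interedges_def, interedges_def,
    interedges_def, product_union, filter_union]

theorem card_interedges_le_of_forall_card_le {t : ℕ} (ht : 0 < t) {C : ℝ} (hC : 0 ≤ C)
    (A B : Finset V)
    (h : ∀ U ⊆ A, ∀ W ⊆ B, #U ≤ t → #W ≤ t → (#(G.interedges U W) : ℝ) ≤ C) :
    (#(G.interedges A B) : ℝ) ≤ (#A / t + 1) * (#B / t + 1) * C := by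
  have hrow : ∀ W ⊆ B, #W ≤ t → (#(G.interedges A W) : ℝ) ≤ (#A / t + 1) * C := fun W hW hWt =>
    le_card_div_add_one_mul_of_forall_card_le (fun U => (#(G.interedges U W) : ℝ))
      (fun _ _ hUU => by exact_mod_cast G.card_interedges_union_left hUU W) ht hC A
      fun U hU hUt => h U hU W hW hUt hWt
  calc (#(G.interedges A B) : ℝ) ≤ (#B / t + 1) * ((#A / t + 1) * C) :=
        le_card_div_add_one_mul_of_forall_card_le (fun W => (#(G.interedges A W) : ℝ))
          (fun _ _ hWW => by exact_mod_cast G.card_interedges_union_right A hWW) ht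
          (by positivity) B hrow
    _ = (#A / t + 1) * (#B / t + 1) * C := by ring

variable [Fintype V]

theorem card_interedges_le_card_interedges_erase_add (A : Finset V) (x : V) :
    #(G.interedges A A) ≤
      #(G.interedges (A.erase x) (A.erase x)) + 2 * #(G.neighborFinset x ∩ A) := by
  calc #(G.interedges A A)
      ≤ #(G.interedges (A.erase x) (A.erase x) ∪
          ({x} ×ˢ (G.neighborFinset x ∩ A) ∪ (G.neighborFinset x ∩ A) ×ˢ {x})) := by
        refine card_le_card fun q hq => ?_
        obtain ⟨a, b⟩ := q
        simp only [mem_interedges_iff, mem_union, mem_product, mem_singleton, mem_inter,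
          mem_erase, mem_neighborFinset] at hq ⊢
        by_cases ha : a = x
        · subst ha; tauto
        · by_cases hb : b = x
          · subst hb; exact Or.inr (Or.inr ⟨⟨hq.2.2.symm, hq.1⟩, rfl⟩)
          · tauto
    _ ≤ _ := by
        refine (card_union_le _ _).trans (add_le_add le_rfl ((card_union_le _ _).trans ?_))
        simp only [card_product, card_singleton]
        omega

theorem exists_subset_lt_card_inter_and_card_interedges_le (k : ℕ) (A : Finset V) :
    ∃ S ⊆ A, (∀ x ∈ S, k < #(G.neighborFinset x ∩ S)) ∧
      #(G.interedges A A) ≤ #(G.interedges S S) + 2 * k * #A := by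
  induction A using Finset.strongInduction with
  | H A ih =>
    by_cases hA : ∀ x ∈ A, k < #(G.neighborFinset x ∩ A)
    · exact ⟨A, Subset.rfl, hA, Nat.le_add_right _ _⟩
    push Not at hA
    obtain ⟨x, hxA, hxk⟩ := hA
    obtain ⟨S, hSA, hS, hE⟩ := ih (A.erase x) (erase_ssubset hxA)
    refine ⟨S, hSA.trans (erase_subset x A), hS, ?_⟩
    have hdel := G.card_interedges_le_card_interedges_erase_add A x
    rw [← card_erase_add_one hxA]
    linarith

def bineighborhoodEdges (u v : V) : Finset (V × V) :=
  G.interedges ((G.neighborFinset u).erase v) ((G.neighborFinset v).erase u)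

def HasSparseSubBineighborhoods (f : ℝ → ℝ) (u v : V) : Prop :=
  ∀ U W : Finset V, U ⊆ (G.neighborFinset u).erase v → W ⊆ (G.neighborFinset v).erase u →
    Disjoint U W → (#(G.interedges U W) : ℝ) ≤ f (#U + #W)

theorem sum_card_bineighborhoodEdges :
    ∑ p : V × V, #(G.bineighborhoodEdges p.1 p.2) =
      ∑ q ∈ G.interedges univ univ,
        #((G.neighborFinset q.1).erase q.2) * #((G.neighborFinset q.2).erase q.1) := by
  have habove : ∀ p : V × V, G.bineighborhoodEdges p.1 p.2 =
      univ.bipartiteAbove (fun p q => q ∈ G.bineighborhoodEdges p.1 p.2) p := by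
    intro p; ext q; simp only [bipartiteAbove, mem_filter, mem_univ, true_and]
  have hbelow : ∀ q : V × V, univ.bipartiteBelow (fun p q => q ∈ G.bineighborhoodEdges p.1 p.2) q
      = if G.Adj q.1 q.2 then (G.neighborFinset q.1).erase q.2 ×ˢ (G.neighborFinset q.2).erase q.1
        else ∅ := by
    rintro ⟨x, y⟩
    ext ⟨u, v⟩
    split_ifs with hxy
    · simp only [bineighborhoodEdges, mem_interedges_iff, mem_erase, ne_eq, mem_neighborFinset,
        mem_bipartiteBelow, mem_univ, adj_comm, hxy, and_true, true_and, mem_product]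
      tauto
    · simp [bineighborhoodEdges, mem_interedges_iff, hxy]
  rw [sum_congr rfl fun p _ => congrArg card (habove p),
    sum_card_bipartiteAbove_eq_sum_card_bipartiteBelow, interedges_def, sum_filter]
  simp_rw [hbelow]
  refine sum_congr rfl fun q _ => ?_
  split_ifs <;> simp

theorem card_bineighborhoodEdges_eq_zero_of_mem_iff {s : Set V}
    (hs : ∀ x y, G.Adj x y → (x ∈ s ↔ y ∉ s)) {u v : V} (huv : u ∈ s ↔ v ∈ s) :
    #(G.bineighborhoodEdges u v) = 0 := by
  refine card_eq_zero.mpr (eq_empty_iff_forall_notMem.mpr ?_)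
  rintro ⟨x, y⟩ hxy
  simp only [bineighborhoodEdges, mem_interedges_iff, mem_erase, mem_neighborFinset] at hxy
  have := hs u x hxy.1.2
  have := hs v y hxy.2.1.2
  have := hs x y hxy.2.2
  tauto

theorem disjoint_erase_neighborFinset_of_not_mem_iff {s : Set V}
    (hs : ∀ x y, G.Adj x y → (x ∈ s ↔ y ∉ s)) {u v : V} (huv : ¬(u ∈ s ↔ v ∈ s)) :
    Disjoint ((G.neighborFinset u).erase v) ((G.neighborFinset v).erase u) := by
  refine Finset.disjoint_left.mpr fun x hxu hxv => ?_
  simp only [mem_erase, mem_neighborFinset] at hxu hxv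
  have := hs u x hxu.2
  have := hs v x hxv.2
  tauto

theorem card_bineighborhoodEdges_le {f : ℝ → ℝ} (hf0 : ∀ x, 0 ≤ f x) (hf : Monotone f)
    {s : Set V} (hs : ∀ x y, G.Adj x y → (x ∈ s ↔ y ∉ s)) {t : ℕ} (ht : 0 < t) (u v : V)
    (hsparse : u ≠ v → G.HasSparseSubBineighborhoods f u v) :
    (#(G.bineighborhoodEdges u v) : ℝ) ≤
      (G.degree u / t + 1) * (G.degree v / t + 1) * f (2 * t) := by
  by_cases huv : u ∈ s ↔ v ∈ s
  · rw [G.card_bineighborhoodEdges_eq_zero_of_mem_iff hs huv, Nat.cast_zero]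
    have := hf0 (2 * t)
    positivity
  have hdisj := G.disjoint_erase_neighborFinset_of_not_mem_iff hs huv
  have hne : u ≠ v := fun h => huv (h ▸ Iff.rfl)
  have hchunk := G.card_interedges_le_of_forall_card_le ht (hf0 (2 * t))
    ((G.neighborFinset u).erase v) ((G.neighborFinset v).erase u)
    fun U hU W hW hUt hWt => (hsparse hne U W hU hW (hdisj.mono hU hW)).trans
      (hf (by push_cast [two_mul]; gcongr))
  refine hchunk.trans (mul_le_mul_of_nonneg_right (mul_le_mul ?_ ?_ (by positivity)
    (by positivity)) (hf0 _))
  all_goals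
    gcongr
    exact (card_erase_le).trans_eq (card_neighborFinset_eq_degree _ _)

theorem sum_card_bineighborhoodEdges_le {f : ℝ → ℝ} (hf0 : ∀ x, 0 ≤ f x) (hf : Monotone f)
    {s : Set V} (hs : ∀ x y, G.Adj x y → (x ∈ s ↔ y ∉ s)) {t : ℕ} (ht : 0 < t)
    (hsparse : ∀ u v, u ≠ v → G.HasSparseSubBineighborhoods f u v) :
    ∑ p : V × V, (#(G.bineighborhoodEdges p.1 p.2) : ℝ) ≤
      (∑ v, ((G.degree v : ℝ) / t + 1)) ^ 2 * f (2 * t) := by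
  calc ∑ p : V × V, (#(G.bineighborhoodEdges p.1 p.2) : ℝ)
      ≤ ∑ p : V × V, (G.degree p.1 / t + 1) * (G.degree p.2 / t + 1) * f (2 * t) :=
        sum_le_sum fun p _ => G.card_bineighborhoodEdges_le hf0 hf hs ht p.1 p.2 (hsparse p.1 p.2)
    _ = (∑ v, ((G.degree v : ℝ) / t + 1)) ^ 2 * f (2 * t) := by
        rw [sq, sum_mul_sum, sum_mul, ← univ_product_univ, sum_product]
        simp_rw [sum_mul]

theorem mul_card_interedges_le_sum_card_bineighborhoodEdges {k : ℕ} {S : Finset V}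
    (hS : ∀ x ∈ S, k < #(G.neighborFinset x ∩ S)) :
    k * k * #(G.interedges S S) ≤ ∑ p : V × V, #(G.bineighborhoodEdges p.1 p.2) := by
  have hdeg : ∀ x ∈ S, ∀ y, k ≤ #((G.neighborFinset x).erase y) := fun x hx y => by
    have := hS x hx
    have := card_le_card (inter_subset_left (s₁ := G.neighborFinset x) (s₂ := S))
    have := pred_card_le_card_erase (s := G.neighborFinset x) (a := y)
    omega
  rw [sum_card_bineighborhoodEdges]
  calc k * k * #(G.interedges S S) = ∑ q ∈ G.interedges S S, k * k := by
        rw [sum_const, smul_eq_mul, mul_comm]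
    _ ≤ ∑ q ∈ G.interedges S S,
        #((G.neighborFinset q.1).erase q.2) * #((G.neighborFinset q.2).erase q.1) :=
        sum_le_sum fun q hq => by
          rw [mem_interedges_iff] at hq
          exact Nat.mul_le_mul (hdeg _ hq.1 _) (hdeg _ hq.2.1 _)
    _ ≤ _ := sum_le_sum_of_subset (G.interedges_mono (subset_univ S) (subset_univ S))

theorem hasSparseSubBineighborhoods_of_edgesBetween_le {f : ℝ → ℝ} {u v : V}
    (h : ∀ U W : Set V, U ⊆ G.neighborSet u \ {v} → W ⊆ G.neighborSet v \ {u} →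
      Disjoint U W → (edgesBetween G U W : ℝ) ≤ f ((U.ncard + W.ncard : ℕ) : ℝ)) :
    G.HasSparseSubBineighborhoods f u v := fun U W hU hW hUW => by
  have := h U W (by simpa using coe_subset.mpr hU) (by simpa using coe_subset.mpr hW)
    (disjoint_coe.mpr hUW)
  simpa [edgesBetween_coe] using this

theorem sum_card_bineighborhoodEdges_le_of_sum_degree_eq {f : ℝ → ℝ} (hf0 : ∀ x, 0 ≤ f x)
    (hf : Monotone f) {s : Set V} (hs : ∀ x y, G.Adj x y → (x ∈ s ↔ y ∉ s))
    (hsparse : ∀ u v, u ≠ v → G.HasSparseSubBineighborhoods f u v) {d : ℝ} (hd : 1 ≤ d)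
    (hdeg : ∑ v, (G.degree v : ℝ) = Fintype.card V * d) :
    ∑ p : V × V, (#(G.bineighborhoodEdges p.1 p.2) : ℝ) ≤ (3 * Fintype.card V) ^ 2 * f (2 * d) := by
  set t := ⌊d⌋₊
  have ht : 0 < t := Nat.floor_pos.mpr hd
  have htd : (t : ℝ) ≤ d := Nat.floor_le (by linarith)
  have hdt : d ≤ 2 * t := by
    have := Nat.lt_floor_add_one d
    have : (1 : ℝ) ≤ t := by exact_mod_cast ht
    linarith
  have hsum : ∑ v, ((G.degree v : ℝ) / t + 1) ≤ 3 * Fintype.card V := by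
    have : Fintype.card V * d / t ≤ 2 * Fintype.card V := by
      rw [div_le_iff₀ (by positivity)]
      nlinarith [(Fintype.card V).cast_nonneg (α := ℝ)]
    rw [sum_add_distrib, ← sum_div, hdeg, sum_const, card_univ, nsmul_one]
    linarith
  calc ∑ p : V × V, (#(G.bineighborhoodEdges p.1 p.2) : ℝ)
      ≤ (∑ v, ((G.degree v : ℝ) / t + 1)) ^ 2 * f (2 * t) :=
        G.sum_card_bineighborhoodEdges_le hf0 hf hs ht hsparse
    _ ≤ (3 * Fintype.card V) ^ 2 * f (2 * d) := by
        gcongr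
        · exact hf0 _
        · exact hf (by linarith)

theorem le_sum_card_bineighborhoodEdges_of_sum_degree_eq {d : ℝ} (hd : 8 ≤ d)
    (hdeg : ∑ v, (G.degree v : ℝ) = Fintype.card V * d) :
    Fintype.card V * d ^ 3 / 128 ≤ ∑ p : V × V, (#(G.bineighborhoodEdges p.1 p.2) : ℝ) := by
  set k := ⌈d / 8⌉₊
  have hk8 : d / 8 ≤ k := Nat.le_ceil _
  have hk4 : (k : ℝ) ≤ d / 4 := by
    have := Nat.ceil_lt_add_one (show 0 ≤ d / 8 by linarith)
    linarith
  obtain ⟨S, -, hS, hE⟩ := G.exists_subset_lt_card_inter_and_card_interedges_le k univ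
  have hES : Fintype.card V * d / 2 ≤ #(G.interedges S S) := by
    have hE' : (#(G.interedges univ univ) : ℝ) ≤ #(G.interedges S S) + 2 * k * Fintype.card V := by
      exact_mod_cast hE
    rw [card_interedges_univ, Nat.cast_sum, hdeg] at hE'
    nlinarith [(Fintype.card V).cast_nonneg (α := ℝ)]
  have hQ : (k * k * #(G.interedges S S) : ℝ) ≤
      ∑ p : V × V, (#(G.bineighborhoodEdges p.1 p.2) : ℝ) := by
    exact_mod_cast G.mul_card_interedges_le_sum_card_bineighborhoodEdges hS
  calc Fintype.card V * d ^ 3 / 128 = d / 8 * (d / 8) * (Fintype.card V * d / 2) := by ring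
    _ ≤ k * k * #(G.interedges S S) := by
        have : 0 ≤ d / 8 := by linarith
        gcongr
    _ ≤ _ := hQ

end SimpleGraph

open SimpleGraph

theorem stmt2 (f : ℝ → ℝ) (hf0 : ∀ x, 0 ≤ f x) (hfmono : Monotone f)
    (V : Type) [Fintype V] (G : SimpleGraph V)
    (s : Set V) (hbip : ∀ u v : V, G.Adj u v → (u ∈ s ↔ v ∉ s))
    (n : ℕ) (hn : n = Fintype.card V)
    (d : ℝ) (hd : d = 2 * G.edgeSet.ncard / n)
    (hd16 : 16 ≤ d)
    (hsparse : ∀ u v : V, u ≠ v → ∀ U W : Set V,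
        U ⊆ G.neighborSet u \ {v} → W ⊆ G.neighborSet v \ {u} → Disjoint U W →
        (edgesBetween G U W : ℝ) ≤ f ((U.ncard + W.ncard : ℕ) : ℝ)) :
    d ^ 3 ≤ 2 ^ 11 * n * f (2 * d) := by
  classical
  subst hn
  have hn0 : (0 : ℝ) < Fintype.card V := by
    rcases (Fintype.card V).eq_zero_or_pos with h | h
    · rw [h, Nat.cast_zero, div_zero] at hd
      linarith
    · exact_mod_cast h
  have hdeg : ∑ v, (G.degree v : ℝ) = Fintype.card V * d := by
    rw [hd, ← Nat.cast_sum, sum_degrees_eq_twice_card_edges, ← coe_edgeFinset,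
      Set.ncard_coe_finset]
    field_simp
    push_cast
    ring
  have hsparse' := fun u v huv =>
    G.hasSparseSubBineighborhoods_of_edgesBetween_le (hsparse u v huv)
  have hupper := G.sum_card_bineighborhoodEdges_le_of_sum_degree_eq hf0 hfmono hbip hsparse'
    (by linarith) hdeg
  have hlower := G.le_sum_card_bineighborhoodEdges_of_sum_degree_eq (by linarith) hdeg
  have hf := hf0 (2 * d)
  refine le_of_mul_le_mul_left ?_ hn0
  nlinarith
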